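/- Li–Pearl benefit-function bounds, negative-σ case: in the potential-outcome model with benefit vector (β, γ, θ, δ), set σ = β − γ − θ + δ, W = (γ−δ)·P(Y1=1) + δ·P(Y0=1) + θ·P(Y0=0), L = max{0, P(Y1=1)−P(Y0=1), P(Y=1)−P(Y0=1), P(Y1=1)−P(Y=1)}, and U = min{P(Y1=1), P(Y0=0), P(X=1,Y=1)+P(X=0,Y=0), P(Y1=1)−P(Y0=1)+P(X=0,Y=1)+P(X=1,Y=0)}. If σ < 0, then W + σ·U ≤ f ≤ W + σ·L. -/
import Mathlib


open MeasureTheory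

/-- The probability of an event, as a real number. -/
noncomputable def pr {Ω : Type*} [MeasurableSpace Ω] (P : Measure Ω) (s : Set Ω) : ℝ :=
  (P s).toReal

lemma pr_nonneg {Ω : Type*} [MeasurableSpace Ω] (P : Measure Ω) (s : Set Ω) : 0 ≤ pr P s :=
  ENNReal.toReal_nonneg

lemma pr_mono {Ω : Type*} [MeasurableSpace Ω] (P : Measure Ω) [IsFiniteMeasure P]
    {s t : Set Ω} (h : s ⊆ t) : pr P s ≤ pr P t :=
  ENNReal.toReal_mono (measure_ne_top P t) (measure_mono h)

lemma pr_union_le {Ω : Type*} [MeasurableSpace Ω] (P : Measure Ω) [IsFiniteMeasure P]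
    (s t : Set Ω) : pr P (s ∪ t) ≤ pr P s + pr P t := by
  have h := measure_union_le (μ := P) s t
  have := ENNReal.toReal_mono (by finiteness) h
  rwa [ENNReal.toReal_add (measure_ne_top P s) (measure_ne_top P t)] at this

lemma pr_split {Ω : Type*} [MeasurableSpace Ω] (P : Measure Ω) [IsFiniteMeasure P]
    (s : Set Ω) {t : Set Ω} (ht : MeasurableSet t) :
    pr P s = pr P (s ∩ t) + pr P (s \ t) := by
  unfold pr
  rw [← ENNReal.toReal_add (measure_ne_top P _) (measure_ne_top P _),
    measure_inter_add_diff s ht]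

theorem li_pearl_benefit_bounds_neg {Ω : Type*} [MeasurableSpace Ω] (P : Measure Ω) [IsProbabilityMeasure P]
    (X Y0 Y1 : Ω → Bool) (hX : Measurable X) (hY0 : Measurable Y0) (hY1 : Measurable Y1)
    (Y : Ω → Bool) (hY : ∀ ω, Y ω = if X ω = true then Y1 ω else Y0 ω)
    (β γ θ δ : ℝ) (hσ : β - γ - θ + δ < 0) :
    ((γ - δ) * (pr P {ω | Y1 ω = true}) + δ * (pr P {ω | Y0 ω = true}) + θ * (pr P {ω | Y0 ω = false})) + (β - γ - θ + δ) * (min (min (pr P {ω | Y1 ω = true}) (pr P {ω | Y0 ω = false})) (min ((pr P {ω | X ω = true ∧ Y ω = true}) + (pr P {ω | X ω = false ∧ Y ω = false})) ((pr P {ω | Y1 ω = true}) - (pr P {ω | Y0 ω = true}) + (pr P {ω | X ω = false ∧ Y ω = true}) + (pr P {ω | X ω = true ∧ Y ω = false})))) ≤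
      β * (pr P {ω | Y1 ω = true ∧ Y0 ω = false}) + γ * (pr P {ω | Y1 ω = true ∧ Y0 ω = true}) + θ * (pr P {ω | Y1 ω = false ∧ Y0 ω = false}) + δ * (pr P {ω | Y1 ω = false ∧ Y0 ω = true}) ∧
    β * (pr P {ω | Y1 ω = true ∧ Y0 ω = false}) + γ * (pr P {ω | Y1 ω = true ∧ Y0 ω = true}) + θ * (pr P {ω | Y1 ω = false ∧ Y0 ω = false}) + δ * (pr P {ω | Y1 ω = false ∧ Y0 ω = true}) ≤
      ((γ - δ) * (pr P {ω | Y1 ω = true}) + δ * (pr P {ω | Y0 ω = true}) + θ * (pr P {ω | Y0 ω = false})) + (β - γ - θ + δ) * (max (max 0 ((pr P {ω | Y1 ω = true}) - (pr P {ω | Y0 ω = true}))) (max ((pr P {ω | Y ω = true}) - (pr P {ω | Y0 ω = true})) ((pr P {ω | Y1 ω = true}) - (pr P {ω | Y ω = true})))) := by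
  have ht0 : MeasurableSet {ω | Y0 ω = true} := hY0 (measurableSet_singleton true)
  have ht1 : MeasurableSet {ω | Y1 ω = true} := hY1 (measurableSet_singleton true)
  set a := pr P {ω | Y1 ω = true ∧ Y0 ω = false} with ha
  set b := pr P {ω | Y1 ω = true ∧ Y0 ω = true} with hb
  set c := pr P {ω | Y1 ω = false ∧ Y0 ω = false} with hc
  set d := pr P {ω | Y1 ω = false ∧ Y0 ω = true} with hd
  -- decompositions
  have s1 : {ω | Y1 ω = true} ∩ {ω | Y0 ω = true} = {ω | Y1 ω = true ∧ Y0 ω = true} := by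
    ext ω; simp
  have s2 : {ω | Y1 ω = true} \ {ω | Y0 ω = true} = {ω | Y1 ω = true ∧ Y0 ω = false} := by
    ext ω; simp
  have s3 : {ω | Y0 ω = true} ∩ {ω | Y1 ω = true} = {ω | Y1 ω = true ∧ Y0 ω = true} := by
    ext ω; simp [and_comm]
  have s4 : {ω | Y0 ω = true} \ {ω | Y1 ω = true} = {ω | Y1 ω = false ∧ Y0 ω = true} := by
    ext ω; simp [and_comm]
  have s5 : {ω | Y0 ω = false} ∩ {ω | Y1 ω = true} = {ω | Y1 ω = true ∧ Y0 ω = false} := by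
    ext ω; simp [and_comm]
  have s6 : {ω | Y0 ω = false} \ {ω | Y1 ω = true} = {ω | Y1 ω = false ∧ Y0 ω = false} := by
    ext ω; simp [and_comm]
  have e1 : pr P {ω | Y1 ω = true} = b + a := by
    rw [pr_split P {ω | Y1 ω = true} ht0, s1, s2]
  have e0 : pr P {ω | Y0 ω = true} = b + d := by
    rw [pr_split P {ω | Y0 ω = true} ht1, s3, s4]
  have e0' : pr P {ω | Y0 ω = false} = a + c := by
    rw [pr_split P {ω | Y0 ω = false} ht1, s5, s6]
  have hb0 : 0 ≤ b := pr_nonneg P _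
  have hc0 : 0 ≤ c := pr_nonneg P _
  have hd0 : 0 ≤ d := pr_nonneg P _
  have ha0 : 0 ≤ a := pr_nonneg P _
  -- inequality (1): a ≤ P(X=1,Y=1) + P(X=0,Y=0)
  have i1 : a ≤ pr P {ω | X ω = true ∧ Y ω = true} + pr P {ω | X ω = false ∧ Y ω = false} := by
    refine le_trans (le_trans (pr_mono P ?_) (pr_union_le P _ _)) (le_refl _)
    intro ω hω
    obtain ⟨h1, h0⟩ := hω
    have hYω := hY ω
    cases hx : X ω with
    | true => left; exact ⟨hx, by rw [hYω, hx]; simpa using h1⟩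
    | false => right; exact ⟨hx, by rw [hYω, hx]; simpa using h0⟩
  -- inequality (2): d ≤ P(X=0,Y=1) + P(X=1,Y=0)
  have i2 : d ≤ pr P {ω | X ω = false ∧ Y ω = true} + pr P {ω | X ω = true ∧ Y ω = false} := by
    refine le_trans (pr_mono P ?_) (pr_union_le P _ _)
    intro ω hω
    obtain ⟨h1, h0⟩ := hω
    have hYω := hY ω
    cases hx : X ω with
    | true => right; exact ⟨hx, by rw [hYω, hx]; simpa using h1⟩
    | false => left; exact ⟨hx, by rw [hYω, hx]; simpa using h0⟩
  -- inequality (3): P(Y=1) ≤ a + P(Y0=1)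
  have i3 : pr P {ω | Y ω = true} ≤ a + pr P {ω | Y0 ω = true} := by
    refine le_trans (pr_mono P ?_) (pr_union_le P _ _)
    intro ω hω
    have hYω := hY ω
    cases hx : X ω with
    | false =>
      right
      simp only [Set.mem_setOf_eq] at hω ⊢
      rw [hYω, hx] at hω; simpa using hω
    | true =>
      simp only [Set.mem_setOf_eq] at hω
      rw [hYω, hx] at hω
      cases h0 : Y0 ω with
      | false => left; exact ⟨by simpa using hω, h0⟩
      | true => right; exact h0
  -- inequality (4): P(Y1=1) ≤ a + P(Y=1)
  have i4 : pr P {ω | Y1 ω = true} ≤ a + pr P {ω | Y ω = true} := by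
    refine le_trans (pr_mono P ?_) (pr_union_le P _ _)
    intro ω hω
    have hYω := hY ω
    cases h0 : Y0 ω with
    | false => left; exact ⟨hω, h0⟩
    | true =>
      right
      simp only [Set.mem_setOf_eq] at hω ⊢
      rw [hYω]
      cases hx : X ω <;> simp [hω, h0]
  -- a ≤ U
  have hU : a ≤ min (min (pr P {ω | Y1 ω = true}) (pr P {ω | Y0 ω = false})) (min ((pr P {ω | X ω = true ∧ Y ω = true}) + (pr P {ω | X ω = false ∧ Y ω = false})) ((pr P {ω | Y1 ω = true}) - (pr P {ω | Y0 ω = true}) + (pr P {ω | X ω = false ∧ Y ω = true}) + (pr P {ω | X ω = true ∧ Y ω = false}))) := by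
    refine le_min (le_min ?_ ?_) (le_min i1 ?_)
    · rw [e1]; linarith
    · rw [e0']; linarith
    · rw [e1, e0]; linarith
  -- L ≤ a
  have hL : max (max 0 ((pr P {ω | Y1 ω = true}) - (pr P {ω | Y0 ω = true}))) (max ((pr P {ω | Y ω = true}) - (pr P {ω | Y0 ω = true})) ((pr P {ω | Y1 ω = true}) - (pr P {ω | Y ω = true}))) ≤ a := by
    refine max_le (max_le ha0 ?_) (max_le ?_ ?_)
    · rw [e1, e0]; linarith
    · linarith
    · linarith
  have hσ' : β - γ - θ + δ ≤ 0 := le_of_lt hσ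
  have key : β * a + γ * b + θ * c + δ * d =
      ((γ - δ) * (pr P {ω | Y1 ω = true}) + δ * (pr P {ω | Y0 ω = true}) +
        θ * (pr P {ω | Y0 ω = false})) + (β - γ - θ + δ) * a := by
    rw [e1, e0, e0']; ring
  constructor
  · have h := mul_le_mul_of_nonpos_left hU hσ'
    linarith [h, key]
  · have h := mul_le_mul_of_nonpos_left hL hσ'
    linarith [h, key]
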